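/- arXiv:2112.01498 — 2 statements merged into one kernel-verified Lean document; each statement's English description precedes it below -/
import Mathlib

section
/- Average encoded Choi state for random U(1)-covariant codes (Appendix C.1): let k, m, α : ℕ and n = k + m; index the joint physical-plus-reference system by ((Fin k → Bool) × (Fin m → Bool)) × (Fin k → Bool). Let ψ : (Fin m → Bool) → ℂ satisfy ∑ f, ‖ψ f‖² = 1 and ψ f = 0 whenever wt f ≠ α, and let Ψ be the matrix with entries Ψ (((x₁,f₁),r₁), ((x₂,f₂),r₂)) = 2^{-k} * (if x₁ = r₁ then 1 else 0) * (if x₂ = r₂ then 1 else 0) * ψ f₁ * star (ψ f₂) (the maximally entangled state between the k input qubits and the reference, tensored with the ancilla state). Let G be the subgroup of Matrix.unitaryGroup ((Fin k → Bool) × (Fin m → Bool)) ℂ of all U commuting with Q := Matrix.diagonal (fun p => ((wt p.1 + wt p.2 : ℕ) : ℂ)), and let μ be a bi-invariant probability measure on G. Then ∫ U, (↑U ⊗ₖ (1 : Matrix (Fin k → Bool) (Fin k → Bool) ℂ)) * Ψ * ((↑U)ᴴ ⊗ₖ 1) ∂μ = Matrix.diagonal (fun q => if wt q.1.1 + wt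 q.1.2 = wt q.2 + α then (2^{-k} : ℂ) / (n.choose (wt q.1.1 + wt q.1.2)) else 0). -/
open Matrix Kronecker MeasureTheory

/-- Entrywise (Borel) measurable structure on complex matrices. -/
noncomputable instance matrixMeasurableSpace {m n : Type*} : MeasurableSpace (Matrix m n ℂ) :=
  inferInstanceAs (MeasurableSpace (m → n → ℂ))

/-- The Hamming weight of a basis state of `m` qubits. -/
def wt {m : ℕ} (f : Fin m → Bool) : ℕ := (Finset.univ.filter (fun i => f i = true)).card

/-- The total Hamming-weight (charge) operator on `k + m` qubits. -/
noncomputable def Qtot (k m : ℕ) :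
    Matrix ((Fin k → Bool) × (Fin m → Bool)) ((Fin k → Bool) × (Fin m → Bool)) ℂ :=
  Matrix.diagonal (fun p => ((wt p.1 + wt p.2 : ℕ) : ℂ))

/-- The subgroup of the unitary group on `k + m` qubits consisting of the unitaries commuting
with the total Hamming-weight operator, i.e. the charge-conserving unitaries. -/
noncomputable def u1SymmetricGroup (k m : ℕ) :
    Subgroup (Matrix.unitaryGroup ((Fin k → Bool) × (Fin m → Bool)) ℂ) where
  carrier := {U | (U : Matrix ((Fin k → Bool) × (Fin m → Bool))
      ((Fin k → Bool) × (Fin m → Bool)) ℂ) * Qtot k m = Qtot k m * (U : Matrix _ _ ℂ)}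
  one_mem' := by simp
  mul_mem' := by
    intro a b ha hb
    have hab : ((a * b : Matrix.unitaryGroup ((Fin k → Bool) × (Fin m → Bool)) ℂ) :
        Matrix ((Fin k → Bool) × (Fin m → Bool)) ((Fin k → Bool) × (Fin m → Bool)) ℂ) =
        (a : Matrix _ _ ℂ) * (b : Matrix _ _ ℂ) := rfl
    show ((a * b : Matrix.unitaryGroup ((Fin k → Bool) × (Fin m → Bool)) ℂ) :
        Matrix _ _ ℂ) * Qtot k m =
      Qtot k m * ((a * b : Matrix.unitaryGroup ((Fin k → Bool) × (Fin m → Bool)) ℂ) :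
        Matrix _ _ ℂ)
    rw [hab, mul_assoc, hb, ← mul_assoc, ha, mul_assoc]
  inv_mem' := by
    intro a ha
    set A : Matrix ((Fin k → Bool) × (Fin m → Bool)) ((Fin k → Bool) × (Fin m → Bool)) ℂ :=
      ((a : Matrix.unitaryGroup ((Fin k → Bool) × (Fin m → Bool)) ℂ) :
        Matrix ((Fin k → Bool) × (Fin m → Bool)) ((Fin k → Bool) × (Fin m → Bool)) ℂ) with hA
    set B : Matrix ((Fin k → Bool) × (Fin m → Bool)) ((Fin k → Bool) × (Fin m → Bool)) ℂ :=
      ((a⁻¹ : Matrix.unitaryGroup ((Fin k → Bool) × (Fin m → Bool)) ℂ) :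
        Matrix ((Fin k → Bool) × (Fin m → Bool)) ((Fin k → Bool) × (Fin m → Bool)) ℂ) with hB
    have h1 : B * A = 1 := by
      have := congrArg (fun x : Matrix.unitaryGroup ((Fin k → Bool) × (Fin m → Bool)) ℂ =>
        (x : Matrix ((Fin k → Bool) × (Fin m → Bool)) ((Fin k → Bool) × (Fin m → Bool)) ℂ))
        (inv_mul_cancel a)
      simpa [hA, hB] using this
    have h2 : A * B = 1 := by
      have := congrArg (fun x : Matrix.unitaryGroup ((Fin k → Bool) × (Fin m → Bool)) ℂ =>
        (x : Matrix ((Fin k → Bool) × (Fin m → Bool)) ((Fin k → Bool) × (Fin m → Bool)) ℂ))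
        (mul_inv_cancel a)
      simpa [hA, hB] using this
    have ha' : A * Qtot k m = Qtot k m * A := ha
    show B * Qtot k m = Qtot k m * B
    calc B * Qtot k m = B * Qtot k m * (A * B) := by rw [h2, mul_one]
      _ = B * (Qtot k m * A) * B := by simp only [mul_assoc]
      _ = B * (A * Qtot k m) * B := by rw [← ha']
      _ = (B * A) * (Qtot k m * B) := by simp only [mul_assoc]
      _ = Qtot k m * B := by rw [h1, one_mul]

/-!
Fix the two reference indices `r₁, r₂`: since the unitaries act trivially on the reference,
the `((p₁, r₁), (p₂, r₂))` entry of the twirled Choi state is the `(p₁, p₂)` entry of the twirl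
`T = ∫ U N Uᴴ dμ` of the block `N = Ψ(·, r₁)(·, r₂)`. Left invariance of `μ` makes `T` invariant
under conjugation by every charge-conserving unitary. Conjugating by the reflection that flips
the sign of one basis vector kills the off-diagonal entries of `T`; conjugating by the
transposition of two basis vectors of equal weight shows that the diagonal of `T` is constant on
each weight sector. Charge-conserving unitaries preserve the trace over a sector, so this
constant is the sector trace of `N` divided by the sector dimension `C(n, w)`. For the Choi block
that trace is `2^{-k}` if `r₁ = r₂` and `w = wt r₁ + α`, and `0` otherwise.
-/

open Finset

instance matrixBorelSpace {m n : Type*} [Fintype m] [Fintype n] : BorelSpace (Matrix m n ℂ) :=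
  inferInstanceAs (BorelSpace (m → n → ℂ))

namespace Matrix

variable {ι : Type*} [Fintype ι]

lemma kronecker_one_mul_mul_kronecker_one_apply {ρ R : Type*} [Fintype ρ] [DecidableEq ρ]
    [Semiring R] (A B : Matrix ι ι R) (M : Matrix (ι × ρ) (ι × ρ) R) (i j : ι) (r s : ρ) :
    ((A ⊗ₖ (1 : Matrix ρ ρ R)) * M * (B ⊗ₖ 1) : Matrix (ι × ρ) (ι × ρ) R) (i, r) (j, s) =
      (A * M.submatrix (·, r) (·, s) * B) i j := by
  simp [mul_apply, Fintype.sum_prod_type, one_apply, sum_mul]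

lemma integral_mul_mul_apply {Ω : Type*} [MeasurableSpace Ω] {μ : Measure Ω}
    {X : Ω → Matrix ι ι ℂ} (hX : ∀ a b, Integrable (fun ω => X ω a b) μ) (A B : Matrix ι ι ℂ)
    (i j : ι) :
    ∫ ω, (A * X ω * B) i j ∂μ = (A * of (fun a b => ∫ ω, X ω a b ∂μ) * B) i j := by
  simp only [mul_apply, of_apply, sum_mul]
  rw [integral_finsetSum _ fun b _ =>
    integrable_finsetSum _ fun a _ => ((hX a b).const_mul _).mul_const _]
  refine sum_congr rfl fun b _ => ?_
  rw [integral_finsetSum _ fun a _ => ((hX a b).const_mul _).mul_const _]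
  exact sum_congr rfl fun a _ => by rw [integral_mul_const, integral_const_mul]

variable [DecidableEq ι]

lemma sum_filter_apply_self_eq_trace {R : Type*} [Semiring R] (p : ι → Prop) [DecidablePred p]
    (X : Matrix ι ι R) :
    ∑ i with p i, X i i = trace (diagonal (fun i => if p i then 1 else 0) * X) := by
  simp [trace, sum_filter]

lemma permMatrix_commute_diagonal {R : Type*} [NonAssocSemiring R] {d : ι → R}
    {σ : Equiv.Perm ι} (hσ : ∀ i, d (σ i) = d i) : Commute (σ.permMatrix R) (diagonal d) := by
  ext a b
  simp only [PEquiv.toMatrix_toPEquiv_mul, PEquiv.mul_toMatrix_toPEquiv, submatrix_apply, id,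
    diagonal_apply, hσ, ← Equiv.eq_symm_apply]

section CommuteDiagonal

variable {R : Type*} [CommRing R] [IsDomain R] {d : ι → R} {U : Matrix ι ι R}

lemma apply_eq_zero_of_commute_diagonal (hU : Commute U (diagonal d)) {i j : ι}
    (hij : d i ≠ d j) : U i j = 0 := by
  have h := congr_fun₂ hU.eq i j
  rw [mul_diagonal, diagonal_mul, mul_comm] at h
  exact (mul_eq_mul_right_iff.mp h).resolve_left (Ne.symm hij)

lemma commute_diagonal_comp_of_commute_diagonal (hU : Commute U (diagonal d)) (f : R → R) :
    Commute U (diagonal (f ∘ d)) := by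
  ext i j
  rw [mul_diagonal, diagonal_mul]
  by_cases hij : d i = d j
  · simp [hij, mul_comm]
  · simp [apply_eq_zero_of_commute_diagonal hU hij]

end CommuteDiagonal

section ConjInvariant

variable {𝕜 : Type*} [RCLike 𝕜] {d : ι → 𝕜}

lemma norm_mul_mul_conjTranspose_apply_le {U : Matrix ι ι 𝕜} (hU : U ∈ unitaryGroup ι 𝕜)
    (N : Matrix ι ι 𝕜) (i j : ι) : ‖(U * N * Uᴴ) i j‖ ≤ ∑ a, ∑ b, ‖N a b‖ := by
  simp only [mul_apply, sum_mul, conjTranspose_apply]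
  rw [sum_comm]
  refine (norm_sum_le _ _).trans (sum_le_sum fun a _ => (norm_sum_le _ _).trans
    (sum_le_sum fun b _ => ?_))
  rw [norm_mul, norm_mul, norm_star]
  calc ‖U i a‖ * ‖N a b‖ * ‖U j b‖ ≤ 1 * ‖N a b‖ * 1 := by
        gcongr
        exacts [entry_norm_bound_of_unitary hU i a, entry_norm_bound_of_unitary hU j b]
    _ = ‖N a b‖ := by ring

lemma sum_filter_mul_mul_conjTranspose_apply_self {U : Matrix ι ι 𝕜}
    (hU : U ∈ unitaryGroup ι 𝕜) (hUd : Commute U (diagonal d)) (N : Matrix ι ι 𝕜) (v : 𝕜) :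
    ∑ i with d i = v, (U * N * Uᴴ) i i = ∑ i with d i = v, N i i := by
  set P : Matrix ι ι 𝕜 := diagonal fun i => if d i = v then 1 else 0
  have hUP : Commute U P :=
    commute_diagonal_comp_of_commute_diagonal hUd fun z => if z = v then 1 else 0
  have hUU : Uᴴ * U = 1 := mem_unitaryGroup_iff'.mp hU
  rw [sum_filter_apply_self_eq_trace, sum_filter_apply_self_eq_trace]
  calc trace (P * (U * N * Uᴴ)) = trace (Uᴴ * (P * U) * N) := by
        rw [← mul_assoc, ← mul_assoc, trace_mul_comm]; simp only [mul_assoc]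
    _ = trace (P * N) := by rw [← hUP.eq, ← mul_assoc, hUU, one_mul]

variable {T : Matrix ι ι 𝕜}

lemma apply_eq_zero_of_forall_conj_eq
    (hT : ∀ U ∈ unitaryGroup ι 𝕜, Commute U (diagonal d) → U * T * Uᴴ = T)
    {i j : ι} (hij : i ≠ j) : T i j = 0 := by
  set D : Matrix ι ι 𝕜 := diagonal (Function.update 1 i (-1))
  have hD : D ∈ unitaryGroup ι 𝕜 := by
    rw [mem_unitaryGroup_iff', star_eq_conjTranspose, diagonal_conjTranspose,
      diagonal_mul_diagonal]
    convert diagonal_one with q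
    by_cases hq : q = i <;> simp [hq]
  have h := congr_fun₂ (hT D hD (commute_diagonal _ _)) i j
  simp [D, diagonal_mul, mul_diagonal, hij.symm] at h
  linear_combination -h / 2

lemma apply_self_eq_of_forall_conj_eq
    (hT : ∀ U ∈ unitaryGroup ι 𝕜, Commute U (diagonal d) → U * T * Uᴴ = T)
    {i j : ι} (hij : d i = d j) : T i i = T j j := by
  have hS : swap 𝕜 i j ∈ unitaryGroup ι 𝕜 := by
    rw [mem_unitaryGroup_iff', star_eq_conjTranspose, conjTranspose_swap, swap_mul_self]
  have hSd : Commute (swap 𝕜 i j) (diagonal d) := permMatrix_commute_diagonal fun x => by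
    rw [Equiv.swap_apply_def]; split_ifs <;> simp_all
  have h := congr_fun₂ (hT _ hS hSd) i i
  rwa [conjTranspose_swap, mul_swap_apply_left, swap_mul_apply_left, eq_comm] at h

lemma eq_diagonal_of_forall_conj_eq
    (hT : ∀ U ∈ unitaryGroup ι 𝕜, Commute U (diagonal d) → U * T * Uᴴ = T) :
    T = diagonal fun i => (∑ j with d j = d i, T j j) / #{j | d j = d i} := by
  ext i j
  rcases eq_or_ne i j with rfl | hij
  · have hcard : (#{j | d j = d i} : 𝕜) ≠ 0 :=
      Nat.cast_ne_zero.mpr (card_ne_zero_of_mem (mem_filter.mpr ⟨mem_univ i, rfl⟩))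
    rw [diagonal_apply_eq, eq_div_iff hcard, mul_comm, ← nsmul_eq_mul, ← sum_const]
    exact sum_congr rfl fun j hj => apply_self_eq_of_forall_conj_eq hT (mem_filter.mp hj).2.symm
  · rw [diagonal_apply_ne _ hij, apply_eq_zero_of_forall_conj_eq hT hij]

end ConjInvariant

section Twirl

variable {G : Subgroup (unitaryGroup ι ℂ)} {d : ι → ℂ}

noncomputable def twirl (μ : Measure G) (N : Matrix ι ι ℂ) : Matrix ι ι ℂ :=
  of fun i j => ∫ U : G, ((U : Matrix ι ι ℂ) * N * (U : Matrix ι ι ℂ)ᴴ) i j ∂μ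

lemma integrable_mul_mul_conjTranspose_apply (μ : Measure G) [IsFiniteMeasure μ]
    (N : Matrix ι ι ℂ) (i j : ι) :
    Integrable (fun U : G => ((U : Matrix ι ι ℂ) * N * (U : Matrix ι ι ℂ)ᴴ) i j) μ :=
  .of_bound (Continuous.aestronglyMeasurable (by fun_prop)) _
    (ae_of_all _ fun U => norm_mul_mul_conjTranspose_apply_le (U : unitaryGroup ι ℂ).2 N i j)

lemma mul_twirl_mul_conjTranspose (μ : Measure G) [IsFiniteMeasure μ] [μ.IsMulLeftInvariant]
    (N : Matrix ι ι ℂ) (g : G) :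
    (g : Matrix ι ι ℂ) * twirl μ N * (g : Matrix ι ι ℂ)ᴴ = twirl μ N := by
  ext i j
  calc ((g : Matrix ι ι ℂ) * twirl μ N * (g : Matrix ι ι ℂ)ᴴ) i j
      = ∫ U : G, ((g : Matrix ι ι ℂ) * ((U : Matrix ι ι ℂ) * N * (U : Matrix ι ι ℂ)ᴴ) *
          (g : Matrix ι ι ℂ)ᴴ) i j ∂μ := by
        rw [integral_mul_mul_apply (integrable_mul_mul_conjTranspose_apply μ N)]; rfl
    _ = ∫ U : G, (((g * U : G) : Matrix ι ι ℂ) * N *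
          ((g * U : G) : Matrix ι ι ℂ)ᴴ) i j ∂μ := by
        simp only [Subgroup.coe_mul, Submonoid.coe_mul, conjTranspose_mul, mul_assoc]
    _ = twirl μ N i j :=
        integral_mul_left_eq_self
          (fun U : G => ((U : Matrix ι ι ℂ) * N * (U : Matrix ι ι ℂ)ᴴ) i j) g

lemma sum_filter_twirl_apply_self (μ : Measure G) [IsProbabilityMeasure μ]
    (hG : ∀ U ∈ G, Commute (U : Matrix ι ι ℂ) (diagonal d)) (N : Matrix ι ι ℂ) (v : ℂ) :
    ∑ i with d i = v, twirl μ N i i = ∑ i with d i = v, N i i := by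
  simp only [twirl, of_apply]
  rw [← integral_finsetSum _ fun i _ => integrable_mul_mul_conjTranspose_apply μ N i i]
  refine (integral_congr_ae (ae_of_all _ fun U : G =>
    sum_filter_mul_mul_conjTranspose_apply_self (U : unitaryGroup ι ℂ).2 (hG _ U.2) N v)).trans ?_
  simp

theorem twirl_eq_diagonal (μ : Measure G) [IsProbabilityMeasure μ] [μ.IsMulLeftInvariant]
    (hG : ∀ U, U ∈ G ↔ Commute (U : Matrix ι ι ℂ) (diagonal d)) (N : Matrix ι ι ℂ) :
    twirl μ N = diagonal fun i => (∑ j with d j = d i, N j j) / #{j | d j = d i} := by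
  have hT : ∀ U ∈ unitaryGroup ι ℂ, Commute U (diagonal d) → U * twirl μ N * Uᴴ = twirl μ N :=
    fun U hU hUd => mul_twirl_mul_conjTranspose μ N ⟨⟨U, hU⟩, (hG _).2 hUd⟩
  rw [eq_diagonal_of_forall_conj_eq hT]
  simp only [sum_filter_twirl_apply_self μ (fun U hU => (hG U).1 hU)]

end Twirl

end Matrix

lemma card_filter_card_filter_eq_choose (α : Type*) [Fintype α] [DecidableEq α] (v : ℕ) :
    #{f : α → Bool | #{i | f i = true} = v} = (Fintype.card α).choose v := by
  rw [← card_univ, ← card_powersetCard]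
  refine card_nbij' (fun f => ({i | f i = true} : Finset α)) (fun s i => decide (i ∈ s))
    ?_ ?_ ?_ ?_ <;> intro _ _ <;> simp_all [mem_powersetCard]

lemma card_filter_wt_add_wt_eq (k m v : ℕ) :
    #{p : (Fin k → Bool) × (Fin m → Bool) | wt p.1 + wt p.2 = v} = (k + m).choose v := by
  have h := card_filter_card_filter_eq_choose (Fin k ⊕ Fin m) v
  rw [Fintype.card_sum, Fintype.card_fin, Fintype.card_fin] at h
  rw [← h]
  refine (card_equiv (Equiv.sumArrowEquivProdArrow _ _ Bool) fun f => ?_).symm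
  simp only [mem_filter, mem_univ, true_and, wt, card_filter, Fintype.sum_sum_type,
    Equiv.sumArrowEquivProdArrow_apply_fst, Equiv.sumArrowEquivProdArrow_apply_snd]
  rfl

lemma sum_filter_mul_star_eq_ite {β γ : Type*} [Fintype β] {w : β → γ} {a : γ} {ψ : β → ℂ}
    (hψnorm : ∑ f, ‖ψ f‖ ^ 2 = (1 : ℝ)) (hψ : ∀ f, w f ≠ a → ψ f = 0)
    (p : γ → Prop) [DecidablePred p] :
    ∑ f with p (w f), ψ f * star (ψ f) = if p a then 1 else 0 := by
  have hsum : ∑ f, ψ f * star (ψ f) = 1 := by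
    simp_rw [Complex.star_def, Complex.mul_conj, Complex.normSq_eq_norm_sq]
    exact_mod_cast hψnorm
  rw [sum_filter, ← hsum, ite_sum_zero]
  refine sum_congr rfl fun f _ => ?_
  rcases eq_or_ne (w f) a with hf | hf
  · rw [hf]
  · simp [hψ f hf]

lemma sum_filter_wt_add_wt_eq_choi {k m α : ℕ} {ψ : (Fin m → Bool) → ℂ}
    (hψnorm : ∑ f : Fin m → Bool, ‖ψ f‖ ^ 2 = (1 : ℝ)) (hψ : ∀ f, wt f ≠ α → ψ f = 0)
    (r₁ r₂ : Fin k → Bool) (v : ℕ) :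
    ∑ q : (Fin k → Bool) × (Fin m → Bool) with wt q.1 + wt q.2 = v,
      (2 : ℂ) ^ (-(k : ℤ)) * (if q.1 = r₁ then 1 else 0) * (if q.1 = r₂ then 1 else 0) *
        ψ q.2 * star (ψ q.2) =
      if r₁ = r₂ ∧ wt r₁ + α = v then (2 : ℂ) ^ (-(k : ℤ)) else 0 := by
  rw [sum_filter, Fintype.sum_prod_type, Fintype.sum_eq_single r₁]
  · by_cases hr : r₁ = r₂
    · subst hr
      simp only [if_true, mul_one, true_and, ← sum_filter, mul_assoc, ← mul_sum,
        sum_filter_mul_star_eq_ite hψnorm hψ (fun w => wt r₁ + w = v), mul_boole]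
    · simp [hr]
  · intro x hx
    simp [hx]

theorem avg_choi_state_u1_general (k m α : ℕ)
    (μ : Measure (u1SymmetricGroup k m)) [IsProbabilityMeasure μ]
    (hleft : ∀ g : u1SymmetricGroup k m, μ.map (fun x => g * x) = μ)
    (ψ : (Fin m → Bool) → ℂ)
    (hψnorm : ∑ f : Fin m → Bool, ‖ψ f‖ ^ 2 = (1 : ℝ))
    (hψ : ∀ f, wt f ≠ α → ψ f = 0)
    (Ψ : Matrix (((Fin k → Bool) × (Fin m → Bool)) × (Fin k → Bool))
      (((Fin k → Bool) × (Fin m → Bool)) × (Fin k → Bool)) ℂ)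
    (hΨ : ∀ x₁ f₁ r₁ x₂ f₂ r₂, Ψ ((x₁, f₁), r₁) ((x₂, f₂), r₂) =
      (2 : ℂ) ^ (-(k : ℤ)) * (if x₁ = r₁ then 1 else 0) * (if x₂ = r₂ then 1 else 0) *
        ψ f₁ * star (ψ f₂))
    (x y : ((Fin k → Bool) × (Fin m → Bool)) × (Fin k → Bool)) :
    ∫ U : u1SymmetricGroup k m,
        ((((U : Matrix.unitaryGroup ((Fin k → Bool) × (Fin m → Bool)) ℂ) :
            Matrix ((Fin k → Bool) × (Fin m → Bool)) ((Fin k → Bool) × (Fin m → Bool)) ℂ) ⊗ₖ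
          (1 : Matrix (Fin k → Bool) (Fin k → Bool) ℂ)) * Ψ *
          ((((U : Matrix.unitaryGroup ((Fin k → Bool) × (Fin m → Bool)) ℂ) :
            Matrix ((Fin k → Bool) × (Fin m → Bool)) ((Fin k → Bool) × (Fin m → Bool)) ℂ))ᴴ ⊗ₖ
          (1 : Matrix (Fin k → Bool) (Fin k → Bool) ℂ))) x y ∂μ =
      Matrix.diagonal (fun q : ((Fin k → Bool) × (Fin m → Bool)) × (Fin k → Bool) =>
        if wt q.1.1 + wt q.1.2 = wt q.2 + α then
          (2 : ℂ) ^ (-(k : ℤ)) / (((k + m).choose (wt q.1.1 + wt q.1.2) : ℕ) : ℂ)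
        else 0) x y := by
  have : μ.IsMulLeftInvariant := ⟨hleft⟩
  obtain ⟨p₁, r₁⟩ := x
  obtain ⟨p₂, r₂⟩ := y
  have hG : ∀ U, U ∈ u1SymmetricGroup k m ↔
      Commute (U : Matrix ((Fin k → Bool) × (Fin m → Bool)) ((Fin k → Bool) × (Fin m → Bool)) ℂ)
        (diagonal fun p : (Fin k → Bool) × (Fin m → Bool) => ((wt p.1 + wt p.2 : ℕ) : ℂ)) :=
    fun _ => Iff.rfl
  have hsector : ∀ p : (Fin k → Bool) × (Fin m → Bool),
      ∑ q with wt q.1 + wt q.2 = wt p.1 + wt p.2, Ψ (q, r₁) (q, r₂) =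
        if r₁ = r₂ ∧ wt r₁ + α = wt p.1 + wt p.2 then (2 : ℂ) ^ (-(k : ℤ)) else 0 := fun p =>
    (sum_congr rfl fun q _ => hΨ q.1 q.2 r₁ q.1 q.2 r₂).trans
      (sum_filter_wt_add_wt_eq_choi hψnorm hψ r₁ r₂ _)
  simp only [kronecker_one_mul_mul_kronecker_one_apply]
  change twirl μ (Ψ.submatrix (·, r₁) (·, r₂)) p₁ p₂ = _
  rw [twirl_eq_diagonal μ hG]
  simp only [Nat.cast_inj, submatrix_apply, hsector, card_filter_wt_add_wt_eq, diagonal_apply,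
    Prod.mk.injEq]
  rcases eq_or_ne p₁ p₂ with rfl | hp
  · rcases eq_or_ne r₁ r₂ with rfl | hr
    · simp [eq_comm, ite_div]
    · simp [hr]
  · simp [hp]

/-- **Average encoded Choi state for random U(1)-covariant codes** (Appendix C.1): twirling the
Choi state of the `(n,k;α)`-`U(1)` encoding (the maximally entangled state between the `k` logical
qubits and a `k`-qubit reference, tensored with an ancilla of definite Hamming weight `α`) by a
bi-invariant probability measure on the charge-conserving unitaries yields the block-diagonal
state `2^{-k} ⊕_j Π_{j+α} / C(n, j+α) ⊗ Π_j^R` (entrywise Bochner integrals). -/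
theorem avg_choi_state_u1 (k m α : ℕ)
    (μ : Measure (u1SymmetricGroup k m)) [IsProbabilityMeasure μ]
    (hleft : ∀ g : u1SymmetricGroup k m, μ.map (fun x => g * x) = μ)
    (hright : ∀ g : u1SymmetricGroup k m, μ.map (fun x => x * g) = μ)
    (ψ : (Fin m → Bool) → ℂ)
    (hψnorm : ∑ f : Fin m → Bool, ‖ψ f‖ ^ 2 = (1 : ℝ))
    (hψ : ∀ f, wt f ≠ α → ψ f = 0)
    (Ψ : Matrix (((Fin k → Bool) × (Fin m → Bool)) × (Fin k → Bool))
      (((Fin k → Bool) × (Fin m → Bool)) × (Fin k → Bool)) ℂ)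
    (hΨ : ∀ x₁ f₁ r₁ x₂ f₂ r₂, Ψ ((x₁, f₁), r₁) ((x₂, f₂), r₂) =
      (2 : ℂ) ^ (-(k : ℤ)) * (if x₁ = r₁ then 1 else 0) * (if x₂ = r₂ then 1 else 0) *
        ψ f₁ * star (ψ f₂))
    (x y : ((Fin k → Bool) × (Fin m → Bool)) × (Fin k → Bool)) :
    ∫ U : u1SymmetricGroup k m,
        ((((U : Matrix.unitaryGroup ((Fin k → Bool) × (Fin m → Bool)) ℂ) :
            Matrix ((Fin k → Bool) × (Fin m → Bool)) ((Fin k → Bool) × (Fin m → Bool)) ℂ) ⊗ₖ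
          (1 : Matrix (Fin k → Bool) (Fin k → Bool) ℂ)) * Ψ *
          ((((U : Matrix.unitaryGroup ((Fin k → Bool) × (Fin m → Bool)) ℂ) :
            Matrix ((Fin k → Bool) × (Fin m → Bool)) ((Fin k → Bool) × (Fin m → Bool)) ℂ))ᴴ ⊗ₖ
          (1 : Matrix (Fin k → Bool) (Fin k → Bool) ℂ))) x y ∂μ =
      Matrix.diagonal (fun q : ((Fin k → Bool) × (Fin m → Bool)) × (Fin k → Bool) =>
        if wt q.1.1 + wt q.1.2 = wt q.2 + α then
          (2 : ℂ) ^ (-(k : ℤ)) / (((k + m).choose (wt q.1.1 + wt q.1.2) : ℕ) : ℂ)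
        else 0) x y :=
  avg_choi_state_u1_general k m α μ hleft ψ hψnorm hψ Ψ hΨ x y
end

section
/- Exact symmetry-term computation for the SU(d) Choi error (proof of Theorem 10): let d ≥ 1 and n ≥ 1, and define ρ : Matrix (Fin d × Fin d) (Fin d × Fin d) ℂ by ρ (a,b) (c,e) = (1/(n*d) : ℂ) * (if a = b then 1 else 0) * (if c = e then 1 else 0) + (((n−1) : ℂ)/(n*d^2)) * (if (a,b) = (c,e) then 1 else 0); that is, ρ = (1/n)·|φ̂⟩⟨φ̂| + ((n−1)/n)·(I/d)⊗(I/d) with |φ̂⟩ = d^{-1/2} ∑_a |a⟩|a⟩ the maximally entangled state. Then ρ is positive semidefinite, and for any hρ : ρ.PosSemidef, the trace of its positive semidefinite square root satisfies (hρ.sqrt).trace = ((Real.sqrt ((d^2 + n − 1)/(n * d^2)) + (d^2 − 1) * Real.sqrt ((n − 1)/(n * d^2))) : ℂ). Consequently the fidelity of ρ with the maximally mixed state I/d² equals 1/d times this quantity. -/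
open Matrix
open scoped ComplexOrder

/-- The positive semidefinite square root of a positive semidefinite matrix, as defined in the
older Mathlib (removed since). -/
noncomputable def Matrix.PosSemidef.sqrt {n 𝕜 : Type*} [Fintype n] [RCLike 𝕜] [DecidableEq n]
    {A : Matrix n n 𝕜} (hA : A.PosSemidef) : Matrix n n 𝕜 :=
  hA.1.eigenvectorUnitary.1 * diagonal ((↑) ∘ (Real.sqrt ·) ∘ hA.1.eigenvalues) *
  (star hA.1.eigenvectorUnitary : Matrix n n 𝕜)

/-!
Write `ρ = α • M + β • 1` with `M = |Ω⟩⟨Ω|` for the unnormalized maximally entangled vector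
`Ω = ∑ₐ |a⟩|a⟩`. Since `M * M = d • M`, the algebra spanned by `1` and `M` is closed under
multiplication, and `(u • M + t • 1)² = (u² d + 2 u t) • M + t² • 1`. Solving for `t = √β` and
`u d = √(α d + β) - √β` gives a positive semidefinite square root of `ρ`, which is the square root
by uniqueness. Its trace is `u d + t d² = √(α d + β) + (d² - 1) √β`.
-/

theorem sq_smul_add_smul_one_of_mul_self_eq {R A : Type*} [CommSemiring R] [Semiring A]
    [Algebra R A] {M : A} {c : R} (hM : M * M = c • M) (u t : R) :
    (u • M + t • 1) ^ 2 = (u ^ 2 * c + 2 * u * t) • M + t ^ 2 • (1 : A) := by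
  rw [sq, add_mul, mul_add, mul_add, smul_mul_smul_comm, smul_mul_smul_comm, smul_mul_smul_comm,
    smul_mul_smul_comm, hM, mul_one, one_mul, one_mul, smul_smul]
  module

namespace Matrix

variable {ι 𝕜 : Type*} [Fintype ι] [DecidableEq ι] [RCLike 𝕜]

theorem PosSemidef.sqrt_eq_cfc {A : Matrix ι ι 𝕜} (hA : A.PosSemidef) :
    hA.sqrt = cfc Real.sqrt A := by
  rw [hA.1.cfc_eq Real.sqrt]
  rfl

theorem PosSemidef.sqrt_eq_of_sq_eq {A S : Matrix ι ι 𝕜} (hA : A.PosSemidef)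
    (hS : S.PosSemidef) (hSA : S ^ 2 = A) : hA.sqrt = S := by
  subst hSA
  rw [hA.sqrt_eq_cfc,
    ← cfc_comp_pow Real.sqrt 2 S Real.continuous_sqrt.continuousOn hS.1.isSelfAdjoint]
  conv_rhs => rw [← cfc_id' ℝ S hS.1.isSelfAdjoint]
  refine cfc_congr fun x hx => ?_
  obtain ⟨i, rfl⟩ := hS.1.spectrum_real_eq_range_eigenvalues ▸ hx
  exact Real.sqrt_sq (hS.eigenvalues_nonneg i)

theorem PosSemidef.sqrt_smul_add_smul_one {M : Matrix ι ι 𝕜} {c α β : ℝ}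
    (h : (α • M + β • 1).PosSemidef) (hM : M.PosSemidef) (hMM : M * M = c • M) (hc : 0 < c)
    (hα : 0 ≤ α) (hβ : 0 ≤ β) :
    h.sqrt = ((√(α * c + β) - √β) / c) • M + √β • 1 := by
  have hs : √β ≤ √(α * c + β) := Real.sqrt_le_sqrt (by nlinarith)
  refine h.sqrt_eq_of_sq_eq ((hM.smul (div_nonneg (sub_nonneg.2 hs) hc.le)).add
    (PosSemidef.one.smul (Real.sqrt_nonneg β))) ?_
  rw [sq_smul_add_smul_one_of_mul_self_eq hMM, Real.sq_sqrt hβ]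
  congr 2
  field_simp
  linear_combination Real.sq_sqrt (by positivity : 0 ≤ α * c + β) - Real.sq_sqrt hβ

end Matrix

section MaxEntangled

variable (ι 𝕜 : Type*) [DecidableEq ι] [RCLike 𝕜]

/-- The unnormalized maximally entangled vector `∑ₐ |a⟩|a⟩`. -/
def maxEntangledVec : ι × ι → 𝕜 :=
  fun p => if p.1 = p.2 then 1 else 0

theorem star_maxEntangledVec : star (maxEntangledVec ι 𝕜) = maxEntangledVec ι 𝕜 := by
  ext p
  by_cases h : p.1 = p.2 <;> simp [maxEntangledVec, h]

variable [Fintype ι]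

theorem maxEntangledVec_dotProduct_self :
    maxEntangledVec ι 𝕜 ⬝ᵥ maxEntangledVec ι 𝕜 = Fintype.card ι := by
  simp [dotProduct, maxEntangledVec, Fintype.sum_prod_type]

theorem posSemidef_vecMulVec_maxEntangledVec :
    (vecMulVec (maxEntangledVec ι 𝕜) (maxEntangledVec ι 𝕜)).PosSemidef := by
  simpa [star_maxEntangledVec] using posSemidef_vecMulVec_self_star (maxEntangledVec ι 𝕜)

theorem vecMulVec_maxEntangledVec_mul_self :
    vecMulVec (maxEntangledVec ι 𝕜) (maxEntangledVec ι 𝕜) *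
        vecMulVec (maxEntangledVec ι 𝕜) (maxEntangledVec ι 𝕜) =
      (Fintype.card ι : ℝ) • vecMulVec (maxEntangledVec ι 𝕜) (maxEntangledVec ι 𝕜) := by
  rw [vecMulVec_mul_vecMulVec, maxEntangledVec_dotProduct_self]
  ext p q
  simp only [vecMulVec_apply, Pi.smul_apply, Matrix.smul_apply, RCLike.real_smul_eq_coe_mul,
    RCLike.ofReal_natCast]
  ring

end MaxEntangled

/-- **Exact symmetry-term computation for the SU(d) Choi error** (proof of Theorem 10): the
two-qudit state `ρ = (1/n)·|φ̂⟩⟨φ̂| + ((n−1)/n)·(I/d)⊗(I/d)`, with `|φ̂⟩` the maximally entangled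
state, is positive semidefinite, and the trace of its positive semidefinite square root equals
`√((d² + n − 1)/(n d²)) + (d² − 1)·√((n − 1)/(n d²))`; consequently the fidelity of `ρ` with the
maximally mixed state `I/d²` is `1/d` times this quantity. -/
theorem sud_symmetry_term_sqrt_trace (d n : ℕ) (hd : 1 ≤ d) (hn : 1 ≤ n)
    (ρ : Matrix (Fin d × Fin d) (Fin d × Fin d) ℂ)
    (hρdef : ∀ a b c e : Fin d, ρ (a, b) (c, e) =
      (1 / ((n : ℂ) * (d : ℂ))) * (if a = b then 1 else 0) * (if c = e then 1 else 0) +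
        (((n : ℂ) - 1) / ((n : ℂ) * (d : ℂ) ^ 2)) * (if (a, b) = (c, e) then 1 else 0)) :
    ρ.PosSemidef ∧ ∀ (hρ : ρ.PosSemidef),
      hρ.sqrt.trace =
        ((Real.sqrt (((d : ℝ) ^ 2 + (n : ℝ) - 1) / ((n : ℝ) * (d : ℝ) ^ 2)) +
          ((d : ℝ) ^ 2 - 1) * Real.sqrt (((n : ℝ) - 1) / ((n : ℝ) * (d : ℝ) ^ 2)) : ℝ) : ℂ) := by
  set M := vecMulVec (maxEntangledVec (Fin d) ℂ) (maxEntangledVec (Fin d) ℂ)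
  set α : ℝ := 1 / (n * d)
  set β : ℝ := (n - 1) / (n * d ^ 2)
  have hd0 : (0 : ℝ) < d := by exact_mod_cast hd
  have hn1 : (1 : ℝ) ≤ n := by exact_mod_cast hn
  have hβ : 0 ≤ β := div_nonneg (by linarith) (by positivity)
  have hρ_eq : ρ = α • M + β • 1 := by
    ext ⟨a, b⟩ ⟨c, e⟩
    rw [hρdef]
    simp only [α, β, M, Matrix.add_apply, Matrix.smul_apply, vecMulVec_apply, maxEntangledVec,
      one_apply, Complex.real_smul]
    push_cast
    ring
  have hMM : M * M = (d : ℝ) • M := by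
    simpa using vecMulVec_maxEntangledVec_mul_self (Fin d) ℂ
  have hM := posSemidef_vecMulVec_maxEntangledVec (Fin d) ℂ
  subst hρ_eq
  refine ⟨(hM.smul (by positivity)).add (PosSemidef.one.smul hβ), fun hρ => ?_⟩
  have hαβ : α * d + β = (d ^ 2 + n - 1) / (n * d ^ 2) := by
    simp only [α, β]
    field_simp
    ring
  have htrM : M.trace = d := by
    simp [M, maxEntangledVec_dotProduct_self]
  rw [hρ.sqrt_smul_add_smul_one hM hMM hd0 (by positivity) hβ, hαβ, trace_add, trace_smul,
    trace_smul, trace_one, htrM]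
  simp only [Fintype.card_prod, Fintype.card_fin, Complex.real_smul]
  push_cast
  field_simp
  ring
end
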